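/- arXiv:2310.09274 — 2 statements merged into one kernel-verified Lean document; each statement's English description precedes it below -/
import Mathlib

section
/- Let A be a totally unimodular N×n real matrix of rank n with N ≥ n, and let α_1,…,α_N be the linear forms on ℝ^n given by its rows. Then every maximal linearly independent subset of {α_1,…,α_N} generates over ℤ the same free abelian subgroup of (ℝ^n)* of rank n. -/
/-!
Let `S` be a maximal linearly independent set of rows. Since `A` has rank `n`, `S` has `n`
elements and the rows indexed by `S` form an invertible `n × n` submatrix `B`. By Cramer's rule,
any row `α_j` is `∑ cᵢ α_{sᵢ}` with `cᵢ = det B' / det B`, where `B'` is `B` with its `i`-th row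
replaced by `α_j`. Both determinants are minors of `A`, so total unimodularity forces `det B = ±1`,
hence `cᵢ = det B · det B' ∈ {0, ±1}`. Thus the `ℤ`-span of the rows in `S` is the `ℤ`-span of all rows, and the
rows in `S`, being linearly independent, are a `ℤ`-basis of it.
-/

/-- The linear form on `ℝⁿ` given by the `k`-th row of the matrix `A`. -/
noncomputable def rowForm {N n : ℕ} (A : Matrix (Fin N) (Fin n) ℝ) (k : Fin N) :
    Module.Dual ℝ (Fin n → ℝ) :=
  ∑ i : Fin n, A k i • LinearMap.proj i

/-- `S` is a maximal linearly independent subset of the rows (as linear forms). -/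
def MaxLinIndepRows {N n : ℕ} (A : Matrix (Fin N) (Fin n) ℝ) (S : Set (Fin N)) : Prop :=
  LinearIndependent ℝ (fun i : S => rowForm A i) ∧
    ∀ T : Set (Fin N), S ⊆ T → LinearIndependent ℝ (fun i : T => rowForm A i) → T = S

open Matrix Module Submodule Set

theorem LinearIndepOn.span_image_eq_span_range_of_maximal {K V ι : Type*} [DivisionRing K]
    [AddCommGroup V] [Module K V] {v : ι → V} {s : Set ι} (hs : LinearIndepOn K v s)
    (hmax : ∀ t, s ⊆ t → LinearIndepOn K v t → t = s) :
    span K (v '' s) = span K (range v) := by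
  refine le_antisymm (span_mono (image_subset_range v s)) (span_le.mpr ?_)
  rintro _ ⟨i, rfl⟩
  exact hs.mem_span_iff.mpr fun hi => hmax _ (subset_insert i s) hi ▸ mem_insert i s

namespace Matrix.IsTotallyUnimodular

variable {m n R : Type*} [CommRing R] {A : Matrix m n R}

theorem det_submatrix_mem_range_intCast (hA : A.IsTotallyUnimodular) {ι : Type*} [Fintype ι]
    [DecidableEq ι] (f : ι → m) (g : ι → n) :
    (A.submatrix f g).det ∈ range (Int.cast : ℤ → R) := by
  obtain ⟨s, hs⟩ := (isTotallyUnimodular_iff_fintype A).mp hA ι f g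
  exact ⟨s, by rw [SignType.intCast_cast, hs]⟩

theorem det_submatrix_mul_self_of_isUnit (hA : A.IsTotallyUnimodular) {ι : Type*} [Fintype ι]
    [DecidableEq ι] {f : ι → m} {g : ι → n} (hu : IsUnit (A.submatrix f g).det) :
    (A.submatrix f g).det * (A.submatrix f g).det = 1 := by
  obtain ⟨s, hs⟩ := (isTotallyUnimodular_iff_fintype A).mp hA ι f g
  rw [← hs] at hu ⊢
  cases s
  · simpa [eq_comm] using hu
  all_goals simp

theorem exists_row_eq_sum_zsmul [Fintype n] [DecidableEq n] [DecidableEq m]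
    (hA : A.IsTotallyUnimodular) (f : n → m) (hf : IsUnit (A.submatrix f id).det) (j : m) :
    ∃ c : n → ℤ, A j = ∑ i, c i • A (f i) := by
  set B := A.submatrix f id
  have hcramer : ∑ i, Bᵀ.cramer (A j) i • A (f i) = B.det • A j := by
    have h := Bᵀ.mulVec_cramer (A j)
    rwa [mulVec_transpose, vecMul_eq_sum, det_transpose] at h
  have hsum : A j = ∑ i, (B.det * Bᵀ.cramer (A j) i) • A (f i) := by
    simp_rw [mul_smul, ← Finset.smul_sum]
    rw [hcramer, smul_smul, det_submatrix_mul_self_of_isUnit hA hf, one_smul]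
  have hint : ∀ i, B.det * Bᵀ.cramer (A j) i ∈ range (Int.cast : ℤ → R) := by
    intro i
    have hupd : B.updateRow i (A j) = A.submatrix (Function.update f i j) id := by
      ext k l
      by_cases h : k = i <;> simp [h, B, updateRow_apply]
    rw [cramer_transpose_apply, hupd]
    obtain ⟨z₁, hz₁⟩ := hA.det_submatrix_mem_range_intCast f id
    obtain ⟨z₂, hz₂⟩ := hA.det_submatrix_mem_range_intCast (Function.update f i j) id
    exact ⟨z₁ * z₂, by push_cast [hz₁, hz₂]; rfl⟩
  choose c hc using hint
  exact ⟨c, by simpa only [← hc, Int.cast_smul_eq_zsmul] using hsum⟩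

end Matrix.IsTotallyUnimodular

theorem rowForm_eq_dotProductEquiv {N n : ℕ} (A : Matrix (Fin N) (Fin n) ℝ) (k : Fin N) :
    rowForm A k = dotProductEquiv ℝ (Fin n) (A k) := by
  ext x
  simp [rowForm, dotProduct]

namespace MaxLinIndepRows

variable {N n : ℕ} {A : Matrix (Fin N) (Fin n) ℝ} {S : Set (Fin N)}

theorem linearIndependent_rows (hS : MaxLinIndepRows A S) :
    LinearIndependent ℝ (fun i : S => A i) := by
  refine LinearIndependent.of_comp (dotProductEquiv ℝ (Fin n)).toLinearMap ?_
  simpa [Function.comp_def, ← rowForm_eq_dotProductEquiv] using hS.1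

theorem natCard_eq_rank (hS : MaxLinIndepRows A S) : Nat.card S = A.rank := by
  have := Fintype.ofFinite S
  have hspan : span ℝ (range (fun i : S => rowForm A i)) = span ℝ (range (rowForm A)) := by
    rw [← image_eq_range]
    exact LinearIndepOn.span_image_eq_span_range_of_maximal hS.1 hS.2
  have hrows : span ℝ (range (rowForm A)) =
      (span ℝ (range A.row)).map (dotProductEquiv ℝ (Fin n) : (Fin n → ℝ) →ₗ[ℝ] _) := by
    rw [map_span, ← range_comp]
    congr 2
    funext k
    exact rowForm_eq_dotProductEquiv A k
  have hcard := finrank_span_eq_card hS.1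
  rw [hspan, hrows, LinearEquiv.finrank_map_eq, ← rank_eq_finrank_span_row] at hcard
  rw [hcard, Nat.card_eq_fintype_card]

theorem span_int_image_eq_span_int_range (hTU : A.IsTotallyUnimodular) (hrank : A.rank = n)
    (hS : MaxLinIndepRows A S) : span ℤ (rowForm A '' S) = span ℤ (range (rowForm A)) := by
  have g : Fin n ≃ S := (Finite.equivFinOfCardEq (hS.natCard_eq_rank.trans hrank)).symm
  have hunit : IsUnit (A.submatrix (fun i => (g i : Fin N)) id).det := by
    rw [← isUnit_iff_isUnit_det, ← linearIndependent_rows_iff_isUnit]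
    exact hS.linearIndependent_rows.comp g g.injective
  refine le_antisymm (span_mono (image_subset_range _ _)) (span_le.mpr ?_)
  rintro _ ⟨j, rfl⟩
  obtain ⟨c, hc⟩ := hTU.exists_row_eq_sum_zsmul _ hunit j
  have hform : rowForm A j = ∑ i, c i • rowForm A (g i) := by
    simp only [rowForm_eq_dotProductEquiv, hc, map_sum, map_zsmul]
  rw [hform]
  exact sum_mem fun i _ => zsmul_mem (subset_span (mem_image_of_mem _ (g i).2)) _

end MaxLinIndepRows

theorem stmt0_general {N n : ℕ} (A : Matrix (Fin N) (Fin n) ℝ)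
    (hTU : A.IsTotallyUnimodular) (hrank : A.rank = n) :
    ∃ M : Submodule ℤ (Module.Dual ℝ (Fin n → ℝ)),
      (∀ S : Set (Fin N), MaxLinIndepRows A S →
        Submodule.span ℤ (rowForm A '' S) = M) ∧
      Module.Free ℤ M ∧ Module.finrank ℤ M = n := by
  obtain ⟨S, hli, hmax⟩ := exists_maximal_linearIndepOn' ℝ (rowForm A)
  have := Fintype.ofFinite S
  have hS : MaxLinIndepRows A S := ⟨hli, fun T hST hT => (hmax T hST hT).symm⟩
  have hliℤ : LinearIndependent ℤ (fun i : S => rowForm A i) := hli.restrict_scalars' ℤ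
  have hM : span ℤ (range (fun i : S => rowForm A i)) = span ℤ (range (rowForm A)) := by
    rw [← image_eq_range, hS.span_int_image_eq_span_int_range hTU hrank]
  refine ⟨span ℤ (range (rowForm A)), fun T hT => hT.span_int_image_eq_span_int_range hTU hrank, ?_, ?_⟩
  · rw [← hM]
    exact Module.Free.of_basis (Basis.span hliℤ)
  · rw [← hM, finrank_span_eq_card hliℤ, ← Nat.card_eq_fintype_card, hS.natCard_eq_rank, hrank]

/-- Every maximal linearly independent subset of the rows of a totally unimodular matrix of
full rank generates the same free abelian group of rank `n` over `ℤ`. -/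
theorem stmt0 {N n : ℕ} (hNn : n ≤ N) (A : Matrix (Fin N) (Fin n) ℝ)
    (hTU : A.IsTotallyUnimodular) (hrank : A.rank = n) :
    ∃ M : Submodule ℤ (Module.Dual ℝ (Fin n → ℝ)),
      (∀ S : Set (Fin N), MaxLinIndepRows A S →
        Submodule.span ℤ (rowForm A '' S) = M) ∧
      Module.Free ℤ M ∧ Module.finrank ℤ M = n :=
  stmt0_general A hTU hrank
end

section
/- If an N×n integer matrix A of full rank n has the property that A·C^{-1} is an integer matrix for every invertible n×n submatrix C of A formed from n of its rows, and one such submatrix is the identity, then A is totally unimodular. -/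
/-!
Every square submatrix `A[f, g]` can be completed to an `n × n` row submatrix `D` with the same
determinant by adding the identity rows indexed by the columns outside `g`: after reordering, `D`
is block upper triangular with an identity block. If that determinant is nonzero, `D` is a basis
and `D⁻¹` is an integer matrix, because its rows are rows of `A * D⁻¹` (those at the identity
rows of `A`). So `det D` and `det D⁻¹` are integers with product `1`.
-/

open Matrix

namespace Matrix

variable {m n R : Type*} [Fintype n] [DecidableEq n] [CommRing R]

theorem exists_intCast_det_of_forall_intCast (M : Matrix n n R)
    (hM : ∀ i j, ∃ z : ℤ, M i j = z) : ∃ z : ℤ, M.det = z := by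
  choose B hB using hM
  refine ⟨(Matrix.of B).det, ?_⟩
  rw [Int.cast_det]
  congr
  ext i j
  simp [hB]

theorem det_eq_one_or_neg_one_of_forall_intCast [CharZero R] (M : Matrix n n R)
    (hM : ∀ i j, ∃ z : ℤ, M i j = z) (hinv : ∀ i j, ∃ z : ℤ, M⁻¹ i j = z)
    (hdet : IsUnit M.det) : M.det = 1 ∨ M.det = -1 := by
  obtain ⟨z, hz⟩ := exists_intCast_det_of_forall_intCast M hM
  obtain ⟨w, hw⟩ := exists_intCast_det_of_forall_intCast M⁻¹ hinv
  have hzw : ((z * w : ℤ) : R) = 1 := by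
    rw [Int.cast_mul, ← hz, ← hw, ← det_mul, mul_nonsing_inv M hdet, det_one]
  rcases Int.eq_one_or_neg_one_of_mul_eq_one (Int.cast_eq_one.mp hzw) with rfl | rfl <;>
    simp [hz]

theorem submatrix_mul_id_of_submatrix_id_eq_one {A : Matrix m n R} {r₀ : n → m}
    (hr₀ : A.submatrix r₀ id = 1) (B : Matrix n n R) : (A * B).submatrix r₀ id = B := by
  rw [submatrix_mul A B r₀ id id Function.bijective_id, hr₀, submatrix_id_id, one_mul]

theorem det_eq_det_submatrix_of_rows_eq_one {k c : Type*} [Fintype k] [Fintype c]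
    [DecidableEq k] [DecidableEq c] (D : Matrix n n R) (e : k ⊕ c ≃ n)
    (hD : ∀ x, D (e (.inr x)) = (1 : Matrix n n R) (e (.inr x))) :
    D.det = (D.submatrix (e ∘ .inl) (e ∘ .inl)).det := by
  have h₂₁ : (D.submatrix e e).toBlocks₂₁ = 0 := by
    ext x j
    simp [toBlocks₂₁, hD]
  have h₂₂ : (D.submatrix e e).toBlocks₂₂ = 1 := by
    ext x y
    simp [toBlocks₂₂, hD, one_apply]
  rw [← det_submatrix_equiv_self e D, ← fromBlocks_toBlocks (D.submatrix e e), h₂₁, h₂₂,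
    det_fromBlocks_zero₂₁, det_one, mul_one]
  rfl

theorem exists_det_submatrix_id_eq_det_submatrix {A : Matrix m n R} {r₀ : n → m}
    (hr₀ : A.submatrix r₀ id = 1) {k : ℕ} (f : Fin k → m) {g : Fin k → n}
    (hg : Function.Injective g) :
    ∃ r : n → m, (A.submatrix r id).det = (A.submatrix f g).det := by
  classical
  let e : Fin k ⊕ ((Set.range g)ᶜ : Set n) ≃ n :=
    ((Equiv.ofInjective g hg).sumCongr (Equiv.refl _)).trans (Equiv.Set.sumCompl _)
  have he_inl : ∀ i, e (.inl i) = g i := fun _ => rfl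
  have he_inr : ∀ x, e (.inr x) = x := fun _ => rfl
  refine ⟨Sum.elim f (r₀ ∘ Subtype.val) ∘ e.symm, ?_⟩
  rw [det_eq_det_submatrix_of_rows_eq_one _ e]
  · congr 1
    ext i j
    simp [← he_inl]
  · intro x
    ext j
    rw [submatrix_apply, Function.comp_apply, Equiv.symm_apply_apply, he_inr]
    exact congrFun (congrFun hr₀ x) j

theorem injective_of_det_submatrix_ne_zero {A : Matrix m n R} {r : n → m}
    (hr : (A.submatrix r id).det ≠ 0) : Function.Injective r := by
  intro i j hij
  by_contra hne
  exact hr (det_zero_of_row_eq hne (by ext; simp [hij]))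

end Matrix

theorem stmt2_general {N n : ℕ} (A : Matrix (Fin N) (Fin n) ℝ)
    (hint : ∀ p q, ∃ z : ℤ, A p q = z)
    (hdiv : ∀ r : Fin n → Fin N, Function.Injective r →
      IsUnit (A.submatrix r id) →
      ∀ p q, ∃ z : ℤ, (A * (A.submatrix r id)⁻¹) p q = z)
    (hid : ∃ r : Fin n → Fin N, Function.Injective r ∧ A.submatrix r id = 1) :
    A.IsTotallyUnimodular := by
  obtain ⟨r₀, -, hr₀⟩ := hid
  have hbasis : ∀ r, (A.submatrix r id).det ≠ 0 →
      (A.submatrix r id).det = 1 ∨ (A.submatrix r id).det = -1 := by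
    intro r hr
    have hdet : IsUnit (A.submatrix r id).det := isUnit_iff_ne_zero.mpr hr
    refine det_eq_one_or_neg_one_of_forall_intCast _ (fun p q => hint (r p) q) ?_ hdet
    intro p q
    rw [← submatrix_mul_id_of_submatrix_id_eq_one hr₀ (A.submatrix r id)⁻¹]
    exact hdiv r (injective_of_det_submatrix_ne_zero hr) ((isUnit_iff_isUnit_det _).mpr hdet)
      (r₀ p) q
  intro k f g _ hg
  obtain ⟨r, hr⟩ := exists_det_submatrix_id_eq_det_submatrix hr₀ f hg
  rw [← hr]
  by_cases hd : (A.submatrix r id).det = 0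
  · exact ⟨0, by simp [hd]⟩
  · rcases hbasis r hd with h | h
    · exact ⟨1, by simp [h]⟩
    · exact ⟨-1, by simp [h]⟩

/-- If an integer `N×n` matrix `A` of full rank `n` is such that `A · C⁻¹` is an integer
matrix for every invertible `n×n` submatrix `C` formed from `n` of its rows, and one such
submatrix is the identity, then `A` is totally unimodular. -/
theorem stmt2 {N n : ℕ} (A : Matrix (Fin N) (Fin n) ℝ)
    (hint : ∀ p q, ∃ z : ℤ, A p q = z)
    (hrank : A.rank = n)
    (hdiv : ∀ r : Fin n → Fin N, Function.Injective r →
      IsUnit (A.submatrix r id) →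
      ∀ p q, ∃ z : ℤ, (A * (A.submatrix r id)⁻¹) p q = z)
    (hid : ∃ r : Fin n → Fin N, Function.Injective r ∧ A.submatrix r id = 1) :
    A.IsTotallyUnimodular :=
  stmt2_general A hint hdiv hid
end
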